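/- Let T : ℝ^d × ℝ^d → ℝ^d be defined on all of ℝ^d × ℝ^d and weakly firmly nonexpansive with respect to a triple ℳ = {M_0, M_1, M_2} of d × d matrices, and suppose the set of fixed points of T (points w with w = T(w, w)) is nonempty. If ℳ satisfies Condition-M, then for any w^0, w^1 ∈ ℝ^d the sequence defined by w^{k+1} = T(w^k, w^{k−1}) converges; if in addition T is continuous, the sequence converges to a fixed point of T. -/

import Mathlib

open Matrix Filter Topology

noncomputable section

/-- Spectral norm (largest singular value) of a real matrix. -/
def specNorm {p q : Type*} [Fintype p] [Fintype q] [DecidableEq q]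
    (M : Matrix p q ℝ) : ℝ :=
  ‖LinearMap.toContinuousLinearMap (Matrix.toEuclideanLin M)‖

/-- The square root of a positive semidefinite matrix (the definition of
`Matrix.PosSemidef.sqrt` in the older Mathlib, which no longer exists). -/
def posSemidefSqrt {n : Type*} [Fintype n] [DecidableEq n] {A : Matrix n n ℝ}
    (hA : A.PosSemidef) : Matrix n n ℝ :=
  hA.1.eigenvectorUnitary.1 * diagonal ((↑) ∘ (√·) ∘ hA.1.eigenvalues) *
    (star hA.1.eigenvectorUnitary : Matrix n n ℝ)

/-- Condition-M for a triple of matrices: `M0 = M1 + M2`, `H := M0 + M2` is symmetric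
positive definite, and `‖H^{-1/2} M2 H^{-1/2}‖₂ < 1/2` (here `H^{-1/2}` is the positive
semidefinite square root of `H⁻¹`). -/
def ConditionM {d : Type*} [Fintype d] [DecidableEq d] (M0 M1 M2 : Matrix d d ℝ) : Prop :=
  M0 = M1 + M2 ∧ ∃ hH : (M0 + M2).PosDef,
    specNorm (posSemidefSqrt hH.inv.posSemidef * M2 * posSemidefSqrt hH.inv.posSemidef) < 1 / 2

/-- The cost functional defining the proximity operator `prox_{φ,H}` at input `x`. -/
def proxCost {ι : Type*} [Fintype ι] (φ : (ι → ℝ) → EReal) (H : Matrix ι ι ℝ)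
    (x u : ι → ℝ) : EReal :=
  ((((1 : ℝ) / 2) * ((u - x) ⬝ᵥ H.mulVec (u - x)) : ℝ) : EReal) + φ u

/-- `p = prox_{φ,H}(x)`: `p` is the unique minimizer of the prox cost. -/
def IsProx {ι : Type*} [Fintype ι] (φ : (ι → ℝ) → EReal) (H : Matrix ι ι ℝ)
    (x p : ι → ℝ) : Prop :=
  (∀ u, proxCost φ H x p ≤ proxCost φ H x u) ∧
  ∀ q, (∀ u, proxCost φ H x q ≤ proxCost φ H x u) → q = p

/-- Proper lower semicontinuous convex extended-real-valued function. -/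
def ProperConvexLsc {ι : Type*} [Fintype ι] (f : (ι → ℝ) → EReal) : Prop :=
  (∃ x, f x ≠ ⊤) ∧ (∀ x, f x ≠ ⊥) ∧ LowerSemicontinuous f ∧
  ∀ x y : ι → ℝ, ∀ t : ℝ, 0 < t → t < 1 →
    f (t • x + (1 - t) • y) ≤ (t : EReal) * f x + ((1 - t : ℝ) : EReal) * f y

/-- Scaling of an extended-real-valued function by a real constant. -/
def smulF {V : Type*} (c : ℝ) (φ : V → EReal) : V → EReal := fun u => (c : EReal) * φ u

/-- The conjugate of the indicator of `C = {b}`: `ι_C*(y) = ⟨y, b⟩`. -/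
def iotaCstar {m : ℕ} (b : Fin m → ℝ) : (Fin m → ℝ) → EReal :=
  fun y => ((y ⬝ᵥ b : ℝ) : EReal)

variable {s m : ℕ} {n : Fin s → ℕ}

/-- Index type for the concatenated variable `x = (x_1, …, x_s)`. -/
abbrev XIdx (n : Fin s → ℕ) := (i : Fin s) × Fin (n i)

/-- Index type for the full variable `v = (x, y)`. -/
abbrev FIdx (n : Fin s → ℕ) (m : ℕ) := XIdx n ⊕ Fin m

/-- The `i`-th block of a concatenated vector. -/
def blk (x : XIdx n → ℝ) (i : Fin s) : Fin (n i) → ℝ := fun j => x ⟨i, j⟩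

/-- The matrix `A = [A_1 … A_s]`. -/
def bigA (A : ∀ i : Fin s, Matrix (Fin m) (Fin (n i)) ℝ) : Matrix (Fin m) (XIdx n) ℝ :=
  Matrix.of fun r p => A p.1 r p.2

/-- The separable objective `∑ f_i(x_i)`. -/
def objSum (f : ∀ i : Fin s, (Fin (n i) → ℝ) → EReal) (x : XIdx n → ℝ) : EReal :=
  ∑ i, f i (blk x i)

/-- `∑ A_i x_i`. -/
def sumAx (A : ∀ i : Fin s, Matrix (Fin m) (Fin (n i)) ℝ) (x : XIdx n → ℝ) : Fin m → ℝ :=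
  ∑ i, (A i).mulVec (blk x i)

/-- `x` is a solution of problem (P). -/
def IsSolution (f : ∀ i : Fin s, (Fin (n i) → ℝ) → EReal)
    (A : ∀ i : Fin s, Matrix (Fin m) (Fin (n i)) ℝ) (b : Fin m → ℝ)
    (x : XIdx n → ℝ) : Prop :=
  sumAx A x = b ∧ ∀ z : XIdx n → ℝ, sumAx A z = b → objSum f x ≤ objSum f z

/-- `b ∈ A(ri(dom(∑ f_i)))` where `ri` is the relative (intrinsic) interior. -/
def RiCond (f : ∀ i : Fin s, (Fin (n i) → ℝ) → EReal)
    (A : ∀ i : Fin s, Matrix (Fin m) (Fin (n i)) ℝ) (b : Fin m → ℝ) : Prop :=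
  b ∈ (fun x => sumAx A x) '' intrinsicInterior ℝ {x : XIdx n → ℝ | objSum f x ≠ ⊤}

/-- The `x`-part of a full vector. -/
def xpart (v : FIdx n m → ℝ) : XIdx n → ℝ := fun p => v (Sum.inl p)

/-- The `y`-part of a full vector. -/
def ypart (v : FIdx n m → ℝ) : Fin m → ℝ := fun r => v (Sum.inr r)

/-- The function `Φ(x_1,…,x_s,y) = ∑ f_i(x_i) + ι_C*(y)`. -/
def PhiFun (f : ∀ i : Fin s, (Fin (n i) → ℝ) → EReal) (b : Fin m → ℝ)
    (v : FIdx n m → ℝ) : EReal :=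
  objSum f (xpart v) + iotaCstar b (ypart v)

/-- The diagonal matrix `R = diag((β/α_1)I, …, (β/α_s)I, (1/β)I)`. -/
def Rmat (α : Fin s → ℝ) (β : ℝ) : Matrix (FIdx n m) (FIdx n m) ℝ :=
  Matrix.diagonal (Sum.elim (fun p : XIdx n => β / α p.1) fun _ => 1 / β)

/-- The inverse `R⁻¹` of the diagonal matrix `R`. -/
def Rinv (α : Fin s → ℝ) (β : ℝ) : Matrix (FIdx n m) (FIdx n m) ℝ :=
  Matrix.diagonal (Sum.elim (fun p : XIdx n => α p.1 / β) fun _ => β)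

/-- The expansive matrix `E = [[I, −P⁻¹Aᵀ],[βA, I]]`. -/
def Emat (A : ∀ i : Fin s, Matrix (Fin m) (Fin (n i)) ℝ) (α : Fin s → ℝ) (β : ℝ) :
    Matrix (FIdx n m) (FIdx n m) ℝ :=
  Matrix.fromBlocks 1 (-(Matrix.diagonal (fun p : XIdx n => α p.1 / β) * (bigA A)ᵀ))
    (β • bigA A) 1

/-- The skew-symmetric matrix `S_A = [[0, −Aᵀ],[A, 0]]`. -/
def SAmat (A : ∀ i : Fin s, Matrix (Fin m) (Fin (n i)) ℝ) :
    Matrix (FIdx n m) (FIdx n m) ℝ :=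
  Matrix.fromBlocks 0 (-(bigA A)ᵀ) (bigA A) 0

/-- `w = 𝒯(v)`, where `𝒯(x_1,…,x_s,y) = (prox_{(α_1/β)f_1}x_1, …, prox_{(α_s/β)f_s}x_s,
prox_{β ι_C*}y)`. -/
def isT (f : ∀ i : Fin s, (Fin (n i) → ℝ) → EReal) (b : Fin m → ℝ)
    (α : Fin s → ℝ) (β : ℝ) (v w : FIdx n m → ℝ) : Prop :=
  (∀ i, IsProx (smulF (α i / β) (f i)) 1 (blk (xpart v) i) (blk (xpart w) i)) ∧
  IsProx (smulF β (iotaCstar b)) 1 (ypart v) (ypart w)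

/-- `w = T_ℳ(u₁, u₂)`, i.e. `w = 𝒯((E − R⁻¹M₀)w + R⁻¹M₁u₁ + R⁻¹M₂u₂)`. -/
def isTM (f : ∀ i : Fin s, (Fin (n i) → ℝ) → EReal)
    (A : ∀ i : Fin s, Matrix (Fin m) (Fin (n i)) ℝ) (b : Fin m → ℝ)
    (α : Fin s → ℝ) (β : ℝ) (M0 M1 M2 : Matrix (FIdx n m) (FIdx n m) ℝ)
    (u1 u2 w : FIdx n m → ℝ) : Prop :=
  isT f b α β ((Emat A α β - Rinv α β * M0).mulVec w + (Rinv α β * M1).mulVec u1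
    + (Rinv α β * M2).mulVec u2) w

/-- `T_ℳ` is well-defined. -/
def TMWellDefined (f : ∀ i : Fin s, (Fin (n i) → ℝ) → EReal)
    (A : ∀ i : Fin s, Matrix (Fin m) (Fin (n i)) ℝ) (b : Fin m → ℝ)
    (α : Fin s → ℝ) (β : ℝ) (M0 M1 M2 : Matrix (FIdx n m) (FIdx n m) ℝ) : Prop :=
  ∀ u1 u2 : FIdx n m → ℝ, ∃! w, isTM f A b α β M0 M1 M2 u1 u2 w


/-- An operator `T : ℝ^d × ℝ^d → ℝ^d` is weakly firmly nonexpansive with respect to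
`{M0, M1, M2}`. -/
def WeaklyFirmlyNonexpansive {d : Type*} [Fintype d]
    (T : (d → ℝ) × (d → ℝ) → (d → ℝ)) (M0 M1 M2 : Matrix d d ℝ) : Prop :=
  ∀ u1 w1 u2 w2 : d → ℝ,
    (T (u2, w2) - T (u1, w1)) ⬝ᵥ M0.mulVec (T (u2, w2) - T (u1, w1)) ≤
    (T (u2, w2) - T (u1, w1)) ⬝ᵥ (M1.mulVec (u2 - u1) + M2.mulVec (w2 - w1))

/-!
Conjugating by `H^{1/2}`, where `H = M₀ + M₂`, turns the inner product of `H` into the Euclidean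
one and `M₂` into `Q = H^{-1/2} M₂ H^{-1/2}`, with `‖Q‖ < 1/2`. For a fixed point `p` the shifted
iterates `aₖ = wᵏ - p` then satisfy
`⟪aₖ₊₂, aₖ₊₂ - aₖ₊₁⟫ ≤ ⟪aₖ₊₂, Q (aₖ₊₂ - 2 aₖ₊₁ + aₖ)⟫`, so the energy
`Eₖ = ‖aₖ₊₁‖²/2 - ⟪aₖ₊₁, Q (aₖ₊₁ - aₖ)⟫ + ‖Q‖/2 ‖aₖ₊₁ - aₖ‖²` decreases by at least
`(1/2 - ‖Q‖) ‖aₖ₊₂ - aₖ₊₁‖²` and dominates `(1 - ‖Q‖)/2 ‖aₖ₊₁‖²`. The iterates are therefore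
bounded with vanishing increments; the defining inequality of `T` passes to the limit along a
convergent subsequence, so its limit `v` is a fixed point, and the same argument with `p = v`
forces `Eₖ → 0`, i.e. `wᵏ → v`.
-/

open scoped RealInnerProductSpace

theorem tendsto_zero_of_mul_sq_norm_le {E α : Type*} [NormedAddCommGroup E] {l : Filter α}
    {x : α → E} {g : α → ℝ} {c : ℝ} (hc : 0 < c) (hle : ∀ k, c * ‖x k‖ ^ 2 ≤ g k) (hg : Tendsto g l (𝓝 0)) :
    Tendsto x l (𝓝 0) := by
  have hsq : Tendsto (fun k => ‖x k‖ ^ 2) l (𝓝 0) :=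
    squeeze_zero (fun _ => sq_nonneg _) (fun k => (le_div_iff₀' hc).2 (hle k))
      (by simpa using hg.div_const c)
  rw [tendsto_zero_iff_norm_tendsto_zero]
  simpa [Real.sqrt_sq_eq_abs] using hsq.sqrt

theorem tendsto_comp_add_one_of_tendsto_sub {E : Type*} [NormedAddCommGroup E] {x : ℕ → E}
    {ψ : ℕ → ℕ} {v : E}
    (hd : Tendsto (fun k => x (k + 1) - x k) atTop (𝓝 0)) (hψ : Tendsto ψ atTop atTop)
    (hx : Tendsto (fun j => x (ψ j)) atTop (𝓝 v)) :
    Tendsto (fun j => x (ψ j + 1)) atTop (𝓝 v) := by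
  simpa using hx.add (hd.comp hψ)

section InnerProductSpace

variable {E : Type*} [NormedAddCommGroup E] [InnerProductSpace ℝ E] (Q : E →L[ℝ] E)

theorem abs_inner_apply_le_half_opNorm_mul (x y : E) :
    |⟪x, Q y⟫| ≤ ‖Q‖ / 2 * (‖x‖ ^ 2 + ‖y‖ ^ 2) := by
  have hQy : ‖x‖ * ‖Q y‖ ≤ ‖x‖ * (‖Q‖ * ‖y‖) := by gcongr; exact Q.le_opNorm y
  nlinarith [abs_real_inner_le_norm x (Q y), mul_nonneg (norm_nonneg Q) (sq_nonneg (‖x‖ - ‖y‖))]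

def twoStepEnergy (x y : E) : ℝ :=
  ‖x‖ ^ 2 / 2 - ⟪x, Q (x - y)⟫ + ‖Q‖ / 2 * ‖x - y‖ ^ 2

theorem continuous_twoStepEnergy : Continuous fun p : E × E => twoStepEnergy Q p.1 p.2 := by
  unfold twoStepEnergy; fun_prop

theorem mul_sq_norm_le_twoStepEnergy (x y : E) :
    (1 - ‖Q‖) / 2 * ‖x‖ ^ 2 ≤ twoStepEnergy Q x y := by
  have := abs_le.1 (abs_inner_apply_le_half_opNorm_mul Q x (x - y))
  unfold twoStepEnergy; nlinarith

theorem twoStepEnergy_nonneg (hQ : ‖Q‖ < 1 / 2) (x y : E) : 0 ≤ twoStepEnergy Q x y := by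
  nlinarith [mul_sq_norm_le_twoStepEnergy Q x y, sq_nonneg ‖x‖]

def TwoStepDescent (a : ℕ → E) : Prop :=
  ∀ k, ⟪a (k + 2), a (k + 2) - a (k + 1)⟫ ≤
    ⟪a (k + 2), Q (a (k + 2) - a (k + 1) - (a (k + 1) - a k))⟫

namespace TwoStepDescent

variable {Q} {a : ℕ → E}

theorem energy_succ_add_le (h : TwoStepDescent Q a) (k : ℕ) :
    twoStepEnergy Q (a (k + 2)) (a (k + 1)) + (1 / 2 - ‖Q‖) * ‖a (k + 2) - a (k + 1)‖ ^ 2 ≤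
      twoStepEnergy Q (a (k + 1)) (a k) := by
  have hkey := h k
  have hsplit : ⟪a (k + 2), Q (a (k + 2) - a (k + 1) - (a (k + 1) - a k))⟫ =
      ⟪a (k + 2), Q (a (k + 2) - a (k + 1))⟫ - ⟪a (k + 1), Q (a (k + 1) - a k)⟫ -
        ⟪a (k + 2) - a (k + 1), Q (a (k + 1) - a k)⟫ := by
    rw [map_sub, inner_sub_right, inner_sub_left]; ring
  have hpolar : ⟪a (k + 2), a (k + 2) - a (k + 1)⟫ =
      ‖a (k + 2)‖ ^ 2 / 2 - ‖a (k + 1)‖ ^ 2 / 2 + ‖a (k + 2) - a (k + 1)‖ ^ 2 / 2 := by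
    rw [norm_sub_sq_real, inner_sub_right, real_inner_self_eq_norm_sq]; ring
  have hcross := abs_le.1
    (abs_inner_apply_le_half_opNorm_mul Q (a (k + 2) - a (k + 1)) (a (k + 1) - a k))
  unfold twoStepEnergy
  linarith

theorem antitone_energy (h : TwoStepDescent Q a) (hQ : ‖Q‖ < 1 / 2) :
    Antitone fun k => twoStepEnergy Q (a (k + 1)) (a k) :=
  antitone_nat_of_succ_le fun k => by
    nlinarith [h.energy_succ_add_le k, sq_nonneg ‖a (k + 2) - a (k + 1)‖]

theorem exists_tendsto_energy (h : TwoStepDescent Q a) (hQ : ‖Q‖ < 1 / 2) :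
    ∃ e, Tendsto (fun k => twoStepEnergy Q (a (k + 1)) (a k)) atTop (𝓝 e) :=
  ⟨_, tendsto_atTop_ciInf (h.antitone_energy hQ)
    ⟨0, by rintro _ ⟨k, rfl⟩; exact twoStepEnergy_nonneg Q hQ _ _⟩⟩

theorem tendsto_sub (h : TwoStepDescent Q a) (hQ : ‖Q‖ < 1 / 2) :
    Tendsto (fun k => a (k + 1) - a k) atTop (𝓝 0) := by
  obtain ⟨e, he⟩ := h.exists_tendsto_energy hQ
  have hdrop : Tendsto (fun k => twoStepEnergy Q (a (k + 1)) (a k) -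
      twoStepEnergy Q (a (k + 2)) (a (k + 1))) atTop (𝓝 0) := by
    simpa using he.sub (he.comp (tendsto_add_atTop_nat 1))
  refine (tendsto_add_atTop_iff_nat 1).1
    (tendsto_zero_of_mul_sq_norm_le (by linarith : 0 < 1 / 2 - ‖Q‖) (fun k => ?_) hdrop)
  linarith [h.energy_succ_add_le k]

theorem isBounded_range (h : TwoStepDescent Q a) (hQ : ‖Q‖ < 1 / 2) :
    Bornology.IsBounded (Set.range a) := by
  have hc : 0 < (1 - ‖Q‖) / 2 := by linarith
  set C := twoStepEnergy Q (a 1) (a 0) / ((1 - ‖Q‖) / 2)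
  refine isBounded_iff_forall_norm_le.2 ⟨‖a 0‖ + √C, ?_⟩
  rintro _ ⟨_ | k, rfl⟩
  · simp [Real.sqrt_nonneg C]
  · have hsq : ‖a (k + 1)‖ ^ 2 ≤ C := by
      rw [le_div_iff₀' hc]
      exact (mul_sq_norm_le_twoStepEnergy Q _ _).trans (h.antitone_energy hQ k.zero_le)
    linarith [Real.le_sqrt_of_sq_le hsq, norm_nonneg (a 0)]

theorem tendsto_zero_of_subseq (h : TwoStepDescent Q a) (hQ : ‖Q‖ < 1 / 2) {ψ : ℕ → ℕ}
    (hψ : StrictMono ψ) (ha : Tendsto (fun j => a (ψ j)) atTop (𝓝 0)) :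
    Tendsto a atTop (𝓝 0) := by
  obtain ⟨e, he⟩ := h.exists_tendsto_energy hQ
  have ha' : Tendsto (fun j => a (ψ j + 1)) atTop (𝓝 0) :=
    tendsto_comp_add_one_of_tendsto_sub (h.tendsto_sub hQ) hψ.tendsto_atTop ha
  have hsub : Tendsto (fun j => twoStepEnergy Q (a (ψ j + 1)) (a (ψ j))) atTop (𝓝 0) := by
    have h0 : twoStepEnergy Q (0 : E) 0 = 0 := by simp [twoStepEnergy]
    simpa only [h0, Function.comp_def] using
      ((continuous_twoStepEnergy Q).tendsto (0, 0)).comp (ha'.prodMk_nhds ha)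
  obtain rfl : e = 0 := tendsto_nhds_unique (he.comp hψ.tendsto_atTop) hsub
  exact (tendsto_add_atTop_iff_nat 1).1 (tendsto_zero_of_mul_sq_norm_le (by linarith)
    (fun k => mul_sq_norm_le_twoStepEnergy Q _ _) he)

end TwoStepDescent

/-- Weak firm nonexpansiveness with respect to `{M₀, M₁, M₂}`, read in the inner product of
`H = M₀ + M₂` and with `Q` standing for `M₂`, so that `M₀ = 1 - Q` and `M₁ = 1 - 2 Q`. -/
def InnerWeaklyFirmlyNonexpansive (T : E × E → E) : Prop :=
  ∀ u₁ w₁ u₂ w₂ : E,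
    ⟪T (u₂, w₂) - T (u₁, w₁), T (u₂, w₂) - T (u₁, w₁) - (u₂ - u₁)⟫ ≤
      ⟪T (u₂, w₂) - T (u₁, w₁), Q (T (u₂, w₂) - T (u₁, w₁) - (u₂ - u₁) - (u₂ - u₁ - (w₂ - w₁)))⟫

namespace InnerWeaklyFirmlyNonexpansive

variable {Q} {T : E × E → E}

theorem twoStepDescent_sub (hT : InnerWeaklyFirmlyNonexpansive Q T) {p : E} (hp : T (p, p) = p)
    {W : ℕ → E} (hW : ∀ k, W (k + 2) = T (W (k + 1), W k)) :
    TwoStepDescent Q fun k => W k - p := by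
  intro k
  have := hT p p (W (k + 1)) (W k)
  rwa [hp, ← hW] at this

theorem map_diag_eq_of_tendsto (hT : InnerWeaklyFirmlyNonexpansive Q T) (hQ : ‖Q‖ < 1 / 2)
    {α : Type*} {l : Filter α} [l.NeBot] {u w : α → E} {v : E} (hu : Tendsto u l (𝓝 v))
    (hw : Tendsto w l (𝓝 v)) (hTuw : Tendsto (fun j => T (u j, w j)) l (𝓝 v)) :
    T (v, v) = v := by
  set g : E × E × E → ℝ := fun p => ⟪p.1, p.1 - p.2.1⟫ - ⟪p.1, Q (p.1 - p.2.1 - (p.2.1 - p.2.2))⟫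
  have hg : Continuous g := by fun_prop
  have hlim := (hg.tendsto _).comp
    ((hTuw.sub_const (T (v, v))).prodMk_nhds ((hu.sub_const v).prodMk_nhds (hw.sub_const v)))
  have hr : ⟪v - T (v, v), v - T (v, v)⟫ ≤ ⟪v - T (v, v), Q (v - T (v, v))⟫ := by
    have := le_of_tendsto hlim (Eventually.of_forall fun j => sub_nonpos.2 (hT v v (u j) (w j)))
    simpa [g] using this
  have hQr := (abs_le.1 (abs_inner_apply_le_half_opNorm_mul Q (v - T (v, v)) (v - T (v, v)))).2
  rw [real_inner_self_eq_norm_sq] at hr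
  have : ‖v - T (v, v)‖ = 0 := by nlinarith [norm_nonneg (v - T (v, v))]
  exact (sub_eq_zero.1 (norm_eq_zero.1 this)).symm

theorem exists_tendsto_fixedPoint [ProperSpace E] (hT : InnerWeaklyFirmlyNonexpansive Q T)
    (hQ : ‖Q‖ < 1 / 2) {p : E} (hp : T (p, p) = p) {W : ℕ → E}
    (hW : ∀ k, W (k + 2) = T (W (k + 1), W k)) :
    ∃ L, Tendsto W atTop (𝓝 L) ∧ T (L, L) = L := by
  have hdesc := hT.twoStepDescent_sub hp hW
  obtain ⟨c, -, ψ, hψ, hc⟩ :=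
    tendsto_subseq_of_bounded (hdesc.isBounded_range hQ) fun k => Set.mem_range_self k
  have hWψ : Tendsto (fun j => W (ψ j)) atTop (𝓝 (c + p)) := by
    simpa [Function.comp_def] using hc.add_const p
  have hdiff : Tendsto (fun k => W (k + 1) - W k) atTop (𝓝 0) := by
    simpa using hdesc.tendsto_sub hQ
  have hWψ1 := tendsto_comp_add_one_of_tendsto_sub hdiff hψ.tendsto_atTop hWψ
  have hWψ2 := tendsto_comp_add_one_of_tendsto_sub hdiff
    (tendsto_add_atTop_nat 1 |>.comp hψ.tendsto_atTop) hWψ1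
  have hfix : T (c + p, c + p) = c + p :=
    hT.map_diag_eq_of_tendsto hQ hWψ1 hWψ (by simpa [hW] using hWψ2)
  refine ⟨c + p, ?_, hfix⟩
  have := (hT.twoStepDescent_sub hfix hW).tendsto_zero_of_subseq hQ hψ
    (by simpa using hWψ.sub_const (c + p))
  simpa using this.add_const (c + p)

end InnerWeaklyFirmlyNonexpansive

end InnerProductSpace

theorem posSemidefSqrt_mul_self {ι : Type*} [Fintype ι] [DecidableEq ι] {A : Matrix ι ι ℝ}
    (hA : A.PosSemidef) : posSemidefSqrt hA * posSemidefSqrt hA = A := by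
  have hU : (star hA.1.eigenvectorUnitary : Matrix ι ι ℝ) * hA.1.eigenvectorUnitary.1 = 1 :=
    Unitary.coe_star_mul_self _
  conv_rhs => rw [hA.1.spectral_theorem, Unitary.conjStarAlgAut_apply]
  simp only [posSemidefSqrt]
  rw [show ∀ a b c e f g : Matrix ι ι ℝ, a * b * c * (e * f * g) = a * b * (c * e) * f * g by
    intros; simp only [Matrix.mul_assoc]]
  rw [hU, Matrix.mul_one, Matrix.mul_assoc _ (diagonal _) (diagonal _), diagonal_mul_diagonal]
  congr 3
  funext i
  simp [Real.mul_self_sqrt (hA.eigenvalues_nonneg i)]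

theorem transpose_posSemidefSqrt {ι : Type*} [Fintype ι] [DecidableEq ι] {A : Matrix ι ι ℝ}
    (hA : A.PosSemidef) : (posSemidefSqrt hA)ᵀ = posSemidefSqrt hA := by
  rw [← conjTranspose_eq_transpose_of_trivial]
  simp only [posSemidefSqrt, conjTranspose_mul, diagonal_conjTranspose, Matrix.mul_assoc]
  simp [Matrix.star_eq_conjTranspose]

theorem inner_toLp_mulVec_toLp_mulVec {ι : Type*} [Fintype ι] (R A : Matrix ι ι ℝ)
    (x y : ι → ℝ) :
    ⟪WithLp.toLp 2 (R *ᵥ x), WithLp.toLp 2 (A *ᵥ R *ᵥ y)⟫ = x ⬝ᵥ (Rᵀ * A * R) *ᵥ y := by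
  rw [EuclideanSpace.inner_toLp_toLp]
  simp [dotProduct_comm, dotProduct_mulVec, vecMul_mulVec, Matrix.mul_assoc]

theorem Matrix.PosDef.exists_euclidean_conj {ι : Type*} [Fintype ι] [DecidableEq ι]
    {H : Matrix ι ι ℝ} (hH : H.PosDef) (M : Matrix ι ι ℝ) :
    ∃ e : (ι → ℝ) ≃L[ℝ] EuclideanSpace ℝ ι, (∀ x y, ⟪e x, e y⟫ = x ⬝ᵥ H *ᵥ y) ∧
      ∀ x y, ⟪e x, LinearMap.toContinuousLinearMap (toEuclideanLin
        (posSemidefSqrt hH.inv.posSemidef * M * posSemidefSqrt hH.inv.posSemidef)) (e y)⟫ =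
        x ⬝ᵥ M *ᵥ y := by
  set S := posSemidefSqrt hH.inv.posSemidef
  have hSS : S * S = H⁻¹ := posSemidefSqrt_mul_self _
  have hS : IsUnit S.det := by
    rw [← isUnit_mul_self_iff, ← det_mul, hSS]
    exact hH.inv.det_pos.ne'.isUnit
  set R := S⁻¹
  have hRS : R * S = 1 := nonsing_inv_mul S hS
  have hSR : S * R = 1 := mul_nonsing_inv S hS
  have hRt : Rᵀ = R := by rw [transpose_nonsing_inv, transpose_posSemidefSqrt]
  let eR : (ι → ℝ) ≃ₗ[ℝ] ι → ℝ := toLinearEquiv' R (invertibleOfRightInverse R S hRS)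
  refine ⟨eR.toContinuousLinearEquiv.trans (EuclideanSpace.equiv ι ℝ).symm, fun x y => ?_,
    fun x y => ?_⟩
  · have := inner_toLp_mulVec_toLp_mulVec R 1 x y
    rwa [one_mulVec, hRt, Matrix.mul_one, ← mul_inv_rev, hSS,
      nonsing_inv_nonsing_inv H hH.det_pos.ne'.isUnit] at this
  · have hM : Rᵀ * (S * M * S) * R = M := by
      rw [hRt, show R * (S * M * S) * R = R * S * M * (S * R) by simp only [Matrix.mul_assoc],
        hRS, hSR, Matrix.one_mul, Matrix.mul_one]
    exact (inner_toLp_mulVec_toLp_mulVec R (S * M * S) x y).trans (by rw [hM])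

theorem WeaklyFirmlyNonexpansive.innerWeaklyFirmlyNonexpansive_conj {ι E : Type*} [Fintype ι]
    [NormedAddCommGroup E] [InnerProductSpace ℝ E] {T : (ι → ℝ) × (ι → ℝ) → ι → ℝ}
    {M0 M1 M2 : Matrix ι ι ℝ} (hT : WeaklyFirmlyNonexpansive T M0 M1 M2) (hM : M0 = M1 + M2)
    (e : (ι → ℝ) ≃L[ℝ] E) {Q : E →L[ℝ] E} (he : ∀ x y, ⟪e x, e y⟫ = x ⬝ᵥ (M0 + M2) *ᵥ y)
    (heQ : ∀ x y, ⟪e x, Q (e y)⟫ = x ⬝ᵥ M2 *ᵥ y) :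
    InnerWeaklyFirmlyNonexpansive Q fun p => e (T (e.symm p.1, e.symm p.2)) := by
  intro u₁ w₁ u₂ w₂
  obtain ⟨x₁, rfl⟩ := e.surjective u₁
  obtain ⟨x₂, rfl⟩ := e.surjective u₂
  obtain ⟨y₁, rfl⟩ := e.surjective w₁
  obtain ⟨y₂, rfl⟩ := e.surjective w₂
  simp only [e.symm_apply_apply, ← map_sub, he, heQ]
  have := hT x₁ y₁ x₂ y₂
  subst hM
  simp only [add_mulVec, mulVec_sub, dotProduct_add, dotProduct_sub] at this ⊢
  linarith

/-- if `T` is weakly firmly nonexpansive w.r.t. `ℳ`, has a fixed point, and `ℳ`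
satisfies Condition-M, then the two-step iteration converges; if `T` is moreover continuous
it converges to a fixed point of `T`. -/
theorem two_step_iteration_converges {d : ℕ}
    (T : ((Fin d → ℝ) × (Fin d → ℝ)) → (Fin d → ℝ))
    (M0 M1 M2 : Matrix (Fin d) (Fin d) ℝ)
    (hT : WeaklyFirmlyNonexpansive T M0 M1 M2)
    (hfix : ∃ w : Fin d → ℝ, T (w, w) = w)
    (hM : ConditionM M0 M1 M2) :
    ∀ w0 w1 : Fin d → ℝ, ∀ W : ℕ → Fin d → ℝ,
      W 0 = w0 → W 1 = w1 → (∀ k : ℕ, W (k + 2) = T (W (k + 1), W k)) →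
      (∃ L : Fin d → ℝ, Tendsto W atTop (nhds L)) ∧
      (Continuous T → ∃ L : Fin d → ℝ, Tendsto W atTop (nhds L) ∧ T (L, L) = L) := by
  intro w0 w1 W _ _ hW
  obtain ⟨hM01, hH, hQ⟩ := hM
  obtain ⟨e, he, heQ⟩ := hH.exists_euclidean_conj M2
  obtain ⟨p, hp⟩ := hfix
  obtain ⟨L, hL, hLfix⟩ :=
    (hT.innerWeaklyFirmlyNonexpansive_conj hM01 e he heQ).exists_tendsto_fixedPoint hQ
      (p := e p) (by simp [hp]) (W := fun k => e (W k)) (by simp [hW])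
  have hWL : Tendsto W atTop (𝓝 (e.symm L)) := by
    simpa [Function.comp_def] using (e.symm.continuous.tendsto L).comp hL
  have hfixL : T (e.symm L, e.symm L) = e.symm L := by
    simpa using congrArg e.symm hLfix
  exact ⟨⟨_, hWL⟩, fun _ => ⟨_, hWL, hfixL⟩⟩
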